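/- Let E = {0} ∪ ⋃_{k=1}^∞ [2^{−2k+1}, 2^{−2k+2}] and F = {0} ∪ ⋃_{k=1}^∞ [2^{−4k+2}, 2^{−4k+3}], both subsets of ℝ. Then: (1) [0,1/2] = F ∪ (1/2)·F ∪ (1/4)·F ∪ (1/8)·F; (2) F = (1/16)·F ∪ [1/4,1/2]; (3) F = (1/16)·F ∪ (((1/2)·F ∪ (1/4)·F ∪ (1/8)·F ∪ (1/16)·F) + 1/4); (4) [0,1] = E ∪ F ∪ (1/4)·F. -/

import Mathlib

open Pointwise

/-- `E = {0} ∪ ⋃_{k≥1} [2^{-2k+1}, 2^{-2k+2}] ⊆ ℝ`. -/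
def setE : Set ℝ :=
  insert 0 (⋃ k : ℕ, Set.Icc ((2 : ℝ) ^ (-2 * ((k : ℤ) + 1) + 1)) ((2 : ℝ) ^ (-2 * ((k : ℤ) + 1) + 2)))

/-- `F = {0} ∪ ⋃_{k≥1} [2^{-4k+2}, 2^{-4k+3}] ⊆ ℝ`. -/
def setF : Set ℝ :=
  insert 0 (⋃ k : ℕ, Set.Icc ((2 : ℝ) ^ (-4 * ((k : ℤ) + 1) + 2)) ((2 : ℝ) ^ (-4 * ((k : ℤ) + 1) + 3)))

/-! Each of the sets involved is `0` together with a union of dyadic shells `[2^n, 2^(n+1)]`: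
`[0, 2^m]` uses all `n < m`, `F` the `n ≤ -2` with `n ≡ 2 (mod 4)`, and `E` the odd `n ≤ -1`.
Scaling by `2^j` shifts the exponents by `j`, so every identity reduces to an identity between
sets of integers cut out by inequalities and congruences. -/

open Set

def dyadicUnion (S : Set ℤ) : Set ℝ :=
  insert 0 (⋃ n ∈ S, Icc ((2 : ℝ) ^ n) (2 ^ (n + 1)))

lemma dyadicUnion_union (S T : Set ℤ) :
    dyadicUnion S ∪ dyadicUnion T = dyadicUnion (S ∪ T) := by
  simp only [dyadicUnion, biUnion_union, insert_union_distrib]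

lemma dyadicUnion_insert (n : ℤ) (S : Set ℤ) :
    dyadicUnion S ∪ Icc ((2 : ℝ) ^ n) (2 ^ (n + 1)) = dyadicUnion (insert n S) := by
  rw [dyadicUnion, dyadicUnion, biUnion_insert, insert_union, union_comm]

lemma zpow_smul_dyadicUnion (j : ℤ) (S : Set ℤ) :
    (2 : ℝ) ^ j • dyadicUnion S = dyadicUnion ((· + j) '' S) := by
  simp only [dyadicUnion, smul_set_insert, smul_zero, smul_set_iUnion₂, biUnion_image,
    LinearOrderedField.smul_Icc (zpow_pos (two_pos : (0 : ℝ) < 2) j), mul_comm ((2 : ℝ) ^ j),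
    ← zpow_add₀ (two_ne_zero : (2 : ℝ) ≠ 0), add_right_comm _ (1 : ℤ) j]

lemma Icc_zero_zpow_eq_dyadicUnion (m : ℤ) :
    Icc (0 : ℝ) (2 ^ m) = dyadicUnion (Iio m) := by
  ext x
  simp only [dyadicUnion, mem_insert_iff, mem_iUnion, mem_Icc, mem_Iio, exists_prop]
  constructor
  · rintro ⟨hx0, hxm⟩
    rcases hx0.eq_or_lt with rfl | hx0
    · exact Or.inl rfl
    have hlow : (2 : ℝ) ^ (Int.clog 2 x - 1) < x := by
      exact_mod_cast Int.zpow_pred_clog_lt_self one_lt_two hx0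
    have hhigh : x ≤ (2 : ℝ) ^ (Int.clog 2 x - 1 + 1) := by
      simpa using Int.self_le_zpow_clog (R := ℝ) one_lt_two x
    exact Or.inr
      ⟨_, (zpow_lt_zpow_iff_right₀ one_lt_two).mp (hlow.trans_le hxm), hlow.le, hhigh⟩
  · rintro (rfl | ⟨n, hnm, hn, hn'⟩)
    · exact ⟨le_rfl, by positivity⟩
    · exact ⟨(zpow_pos two_pos n).le.trans hn,
        hn'.trans (zpow_le_zpow_right₀ one_le_two (by omega))⟩

lemma range_sub_mul_nat (c d : ℤ) (hd : 0 < d) :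
    range (fun k : ℕ => c - d * k) = {n | n ≤ c ∧ d ∣ c - n} := by
  ext n
  constructor
  · rintro ⟨k, rfl⟩
    exact ⟨by nlinarith [k.cast_nonneg (α := ℤ)], ⟨k, by ring⟩⟩
  · rintro ⟨hnc, m, hm⟩
    have hm0 : 0 ≤ m := by nlinarith
    exact ⟨m.toNat, by simp only [Int.toNat_of_nonneg hm0]; linarith⟩

lemma setF_eq_dyadicUnion : setF = dyadicUnion {n | n ≤ -2 ∧ 4 ∣ -2 - n} := by
  rw [← range_sub_mul_nat _ _ four_pos, dyadicUnion, biUnion_range, setF]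
  congr! 5 <;> ring

lemma setE_eq_dyadicUnion : setE = dyadicUnion {n | n ≤ -1 ∧ 2 ∣ -1 - n} := by
  rw [← range_sub_mul_nat _ _ two_pos, dyadicUnion, biUnion_range, setE]
  congr! 5 <;> ring

lemma zpow_smul_setF (j : ℤ) :
    (2 : ℝ) ^ j • setF = dyadicUnion {n | n ≤ j - 2 ∧ 4 ∣ j - 2 - n} := by
  rw [setF_eq_dyadicUnion, zpow_smul_dyadicUnion, image_add_right]
  congr 1
  ext n
  simp only [mem_preimage, mem_ofPred_eq]
  omega

lemma Icc_zero_half_eq_setF_union :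
    Icc (0 : ℝ) (1 / 2) = setF ∪ (2 : ℝ)⁻¹ • setF ∪ (4 : ℝ)⁻¹ • setF ∪ (8 : ℝ)⁻¹ • setF := by
  rw [show (1 / 2 : ℝ) = 2 ^ (-1 : ℤ) by norm_num, show (2 : ℝ)⁻¹ = 2 ^ (-1 : ℤ) by norm_num,
    show (4 : ℝ)⁻¹ = 2 ^ (-2 : ℤ) by norm_num, show (8 : ℝ)⁻¹ = 2 ^ (-3 : ℤ) by norm_num,
    Icc_zero_zpow_eq_dyadicUnion, zpow_smul_setF, zpow_smul_setF, zpow_smul_setF,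
    setF_eq_dyadicUnion, dyadicUnion_union, dyadicUnion_union, dyadicUnion_union]
  congr 1; ext n; simp only [mem_Iio, mem_union, mem_ofPred_eq]; omega

lemma setF_eq_smul_union_Icc : setF = (16 : ℝ)⁻¹ • setF ∪ Icc (1 / 4 : ℝ) (1 / 2) := by
  rw [show (16 : ℝ)⁻¹ = 2 ^ (-4 : ℤ) by norm_num,
    show Icc (1 / 4 : ℝ) (1 / 2) = Icc (2 ^ (-2 : ℤ)) (2 ^ ((-2 : ℤ) + 1)) by norm_num,
    zpow_smul_setF, dyadicUnion_insert, setF_eq_dyadicUnion]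
  congr 1; ext n; simp only [mem_insert_iff, mem_ofPred_eq]; omega

lemma smul_setF_union_eq_Icc_zero_quarter :
    (2 : ℝ)⁻¹ • setF ∪ (4 : ℝ)⁻¹ • setF ∪ (8 : ℝ)⁻¹ • setF ∪ (16 : ℝ)⁻¹ • setF
      = Icc 0 (1 / 4) := by
  rw [show (1 / 4 : ℝ) = 2 ^ (-2 : ℤ) by norm_num, show (2 : ℝ)⁻¹ = 2 ^ (-1 : ℤ) by norm_num,
    show (4 : ℝ)⁻¹ = 2 ^ (-2 : ℤ) by norm_num, show (8 : ℝ)⁻¹ = 2 ^ (-3 : ℤ) by norm_num,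
    show (16 : ℝ)⁻¹ = 2 ^ (-4 : ℤ) by norm_num, Icc_zero_zpow_eq_dyadicUnion,
    zpow_smul_setF, zpow_smul_setF, zpow_smul_setF, zpow_smul_setF,
    dyadicUnion_union, dyadicUnion_union, dyadicUnion_union]
  congr 1; ext n; simp only [mem_Iio, mem_union, mem_ofPred_eq]; omega

lemma Icc_zero_one_eq_setE_union : Icc (0 : ℝ) 1 = setE ∪ setF ∪ (4 : ℝ)⁻¹ • setF := by
  rw [← zpow_zero (2 : ℝ), show (4 : ℝ)⁻¹ = 2 ^ (-2 : ℤ) by norm_num, Icc_zero_zpow_eq_dyadicUnion,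
    zpow_smul_setF, setE_eq_dyadicUnion, setF_eq_dyadicUnion, dyadicUnion_union, dyadicUnion_union]
  congr 1; ext n; simp only [mem_Iio, mem_union, mem_ofPred_eq]; omega

theorem setF_decompositions :
    Set.Icc (0 : ℝ) (1 / 2)
        = setF ∪ (2 : ℝ)⁻¹ • setF ∪ (4 : ℝ)⁻¹ • setF ∪ (8 : ℝ)⁻¹ • setF
    ∧ setF = (16 : ℝ)⁻¹ • setF ∪ Set.Icc (1 / 4 : ℝ) (1 / 2)
    ∧ setF = (16 : ℝ)⁻¹ • setF ∪ (fun x : ℝ => x + 1 / 4) ''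
        ((2 : ℝ)⁻¹ • setF ∪ (4 : ℝ)⁻¹ • setF ∪ (8 : ℝ)⁻¹ • setF ∪ (16 : ℝ)⁻¹ • setF)
    ∧ Set.Icc (0 : ℝ) 1 = setE ∪ setF ∪ (4 : ℝ)⁻¹ • setF := by
  refine ⟨Icc_zero_half_eq_setF_union, setF_eq_smul_union_Icc, ?_, Icc_zero_one_eq_setE_union⟩
  rw [smul_setF_union_eq_Icc_zero_quarter, image_add_const_Icc, zero_add,
    show (1 / 4 + 1 / 4 : ℝ) = 1 / 2 by norm_num]
  exact setF_eq_smul_union_Icc
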